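/- Let y: ℝ → ℝ be nondecreasing and Lipschitz with y_ξ ≥ 0, and let H be nondecreasing Lipschitz with y + H = id. Suppose r = 1_{[0,1]} and r̄ = -1_{[0,1]}, and for 0 < ε < 1 define f^ε(ξ) = ξ for ξ < 0, f^ε(ξ) = εξ for 0 ≤ ξ < 1/ε, f^ε(ξ) = ξ + 1 - 1/ε for ξ ≥ 1/ε. Then f^ε ∈ G and ‖(r∘f^ε)·(f^ε)' - (r̄∘f^ε)·(f^ε)'‖_{L²(ℝ)} ≤ 2√ε. -/

import Mathlib

/-!
Both `f^ε - id` and `(f^ε)⁻¹ - id` are constant multiples of the clamp `ξ ↦ min (max ξ 0) c`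
(with `c = 1/ε`, resp. `c = 1`), hence bounded and Lipschitz, and `(f^ε)' - 1 = (ε - 1)·1_{(0,1/ε)}`
a.e. Since `f^ε` maps `[0, 1/ε]` onto `[0, 1]` with slope `ε`, the difference of the relabeled
densities is `2ε·1_{(0,1/ε)}` a.e., whose `L²` norm is `2ε·ε^{-1/2} = 2√ε`.
-/

open MeasureTheory ENNReal

/-- The relabeling group as a set of homeomorphisms of `ℝ`. -/
def Gset : Set (ℝ ≃ₜ ℝ) :=
  {f | (∃ C, LipschitzWith C (fun x => f x - x)) ∧
       BddAbove (Set.range fun x => |f x - x|) ∧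
       (∃ C, LipschitzWith C (fun x => f.symm x - x)) ∧
       BddAbove (Set.range fun x => |f.symm x - x|) ∧
       MemLp (fun x => deriv (⇑f) x - 1) 2 volume}

/-- The relabeling `f^ε`. -/
noncomputable def fEps (ε ξ : ℝ) : ℝ :=
  if ξ < 0 then ξ else if ξ < 1 / ε then ε * ξ else ξ + 1 - 1 / ε

open Set

lemma lipschitzWith_mul_clamp (a c : ℝ) :
    LipschitzWith ‖a‖₊ fun x : ℝ => a * min (max x 0) c := by
  have h := (lipschitzWith_smul a).comp ((LipschitzWith.id.max_const 0).min_const c)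
  rw [mul_one] at h
  exact h

lemma abs_mul_clamp_le (a : ℝ) {c : ℝ} (hc : 0 ≤ c) (x : ℝ) :
    |a * min (max x 0) c| ≤ |a| * c := by
  rw [abs_mul, abs_of_nonneg (le_min (le_max_right x 0) hc)]
  exact mul_le_mul_of_nonneg_left (min_le_right _ _) (abs_nonneg a)

lemma mem_Gset_of_clamp {f : ℝ ≃ₜ ℝ} {a b c d : ℝ} (hc : 0 ≤ c) (hd : 0 ≤ d)
    (hf : ∀ x, f x - x = a * min (max x 0) c) (hfsymm : ∀ x, f.symm x - x = b * min (max x 0) d)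
    (hderiv : MemLp (fun x => deriv f x - 1) 2 volume) : f ∈ Gset := by
  simp only [Gset, mem_ofPred_eq, hf, hfsymm]
  exact ⟨⟨_, lipschitzWith_mul_clamp a c⟩, ⟨_, forall_mem_range.2 (abs_mul_clamp_le a hc)⟩,
    ⟨_, lipschitzWith_mul_clamp b d⟩, ⟨_, forall_mem_range.2 (abs_mul_clamp_le b hd)⟩, hderiv⟩

lemma eLpNorm_indicator_Ioo_const {a b : ℝ} (hab : a ≤ b) (c : ℝ) :
    eLpNorm ((Ioo a b).indicator fun _ => c) 2 volume = ENNReal.ofReal (|c| * √(b - a)) := by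
  rw [eLpNorm_indicator_const measurableSet_Ioo two_ne_zero ofNat_ne_top, Real.volume_Ioo,
    Real.enorm_eq_ofReal_abs, toReal_ofNat, ENNReal.ofReal_mul (abs_nonneg c),
    ENNReal.ofReal_rpow_of_nonneg (sub_nonneg.2 hab) (by norm_num), Real.sqrt_eq_rpow]

section

variable {ε ξ : ℝ}

lemma fEps_of_neg (h : ξ < 0) : fEps ε ξ = ξ := if_pos h

lemma fEps_of_mem_Ico (h : ξ ∈ Ico 0 (1 / ε)) : fEps ε ξ = ε * ξ := by
  rw [fEps, if_neg h.1.not_gt, if_pos h.2]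

lemma fEps_of_ge (hε : 0 < ε) (h : 1 / ε ≤ ξ) : fEps ε ξ = ξ + 1 - 1 / ε := by
  have : 0 ≤ ξ := (one_div_pos.2 hε).le.trans h
  rw [fEps, if_neg this.not_gt, if_neg h.not_gt]

lemma fEps_sub_self (hε : 0 < ε) (ξ : ℝ) :
    fEps ε ξ - ξ = (ε - 1) * min (max ξ 0) (1 / ε) := by
  have hε' : 0 < 1 / ε := one_div_pos.2 hε
  rcases lt_or_ge ξ 0 with h | h
  · rw [fEps_of_neg h, max_eq_right h.le, min_eq_left hε'.le]; ring
  rcases lt_or_ge ξ (1 / ε) with h' | h'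
  · rw [fEps_of_mem_Ico ⟨h, h'⟩, max_eq_left h, min_eq_left h'.le]; ring
  · rw [fEps_of_ge hε h', max_eq_left h, min_eq_right h']; field_simp; ring

noncomputable def gEps (ε ξ : ℝ) : ℝ := ξ + (1 / ε - 1) * min (max ξ 0) 1

lemma gEps_fEps (hε : 0 < ε) (ξ : ℝ) : gEps ε (fEps ε ξ) = ξ := by
  rcases lt_or_ge ξ 0 with h | h
  · rw [fEps_of_neg h, gEps, max_eq_right h.le, min_eq_left zero_le_one]; ring
  rcases lt_or_ge ξ (1 / ε) with h' | h'
  · have hεξ : ε * ξ < 1 := by rwa [lt_div_iff₀' hε] at h'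
    rw [fEps_of_mem_Ico ⟨h, h'⟩, gEps, max_eq_left (by positivity), min_eq_left hεξ.le]
    field_simp; ring
  · have h1 : 1 ≤ ξ + 1 - 1 / ε := by linarith
    rw [fEps_of_ge hε h', gEps, max_eq_left (by linarith), min_eq_right h1]; ring

lemma fEps_gEps (hε : 0 < ε) (ξ : ℝ) : fEps ε (gEps ε ξ) = ξ := by
  rcases lt_or_ge ξ 0 with h | h
  · rw [gEps, max_eq_right h.le, min_eq_left zero_le_one, mul_zero, add_zero, fEps_of_neg h]
  rcases lt_or_ge ξ 1 with h' | h'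
  · have hg : gEps ε ξ = ξ / ε := by
      rw [gEps, max_eq_left h, min_eq_left h'.le]; field_simp; ring
    rw [hg, fEps_of_mem_Ico ⟨by positivity, div_lt_div_of_pos_right h' hε⟩]; field_simp
  · have hg : gEps ε ξ = ξ + (1 / ε - 1) := by
      rw [gEps, max_eq_left h, min_eq_right h', mul_one]
    rw [hg, fEps_of_ge hε (by linarith)]; ring

lemma continuous_fEps (hε : 0 < ε) : Continuous (fEps ε) := by
  have : fEps ε = fun ξ => ξ + (ε - 1) * min (max ξ 0) (1 / ε) :=
    funext fun ξ => eq_add_of_sub_eq' (fEps_sub_self hε ξ)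
  rw [this]; fun_prop

noncomputable def fEpsHomeomorph (hε : 0 < ε) : ℝ ≃ₜ ℝ where
  toFun := fEps ε
  invFun := gEps ε
  left_inv := gEps_fEps hε
  right_inv := fEps_gEps hε
  continuous_toFun := continuous_fEps hε
  continuous_invFun := by unfold gEps; fun_prop

lemma deriv_fEps (hε : 0 < ε) (h0 : ξ ≠ 0) (h1 : ξ ≠ 1 / ε) :
    deriv (fEps ε) ξ = (Ioo 0 (1 / ε)).indicator (fun _ => ε - 1) ξ + 1 := by
  rcases h0.lt_or_gt with h | h
  · have hev : fEps ε =ᶠ[nhds ξ] id := eventually_lt_nhds h |>.mono fun _ => fEps_of_neg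
    rw [hev.deriv_eq, deriv_id, indicator_of_notMem fun hξ => h.not_gt hξ.1, zero_add]
  rcases h1.lt_or_gt with h' | h'
  · have hev : fEps ε =ᶠ[nhds ξ] (ε * ·) := Filter.mem_of_superset (Ioo_mem_nhds h h')
      fun _ hx => fEps_of_mem_Ico (Ioo_subset_Ico_self hx)
    rw [hev.deriv_eq, deriv_const_mul_field', deriv_id'',
      indicator_of_mem (show ξ ∈ Ioo 0 (1 / ε) from ⟨h, h'⟩)]
    ring
  · have hev : fEps ε =ᶠ[nhds ξ] (· + (1 - 1 / ε)) := (eventually_gt_nhds h').mono fun x hx => by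
      rw [fEps_of_ge hε hx.le]; ring
    rw [hev.deriv_eq, deriv_add_const, deriv_id'', indicator_of_notMem fun hξ => h'.not_gt hξ.2,
      zero_add]

lemma fEps_mem_Icc_iff (hε : 0 < ε) : fEps ε ξ ∈ Icc 0 1 ↔ ξ ∈ Icc 0 (1 / ε) := by
  rcases lt_or_ge ξ 0 with h | h
  · simp [fEps_of_neg h, h.not_ge]
  rcases lt_or_ge ξ (1 / ε) with h' | h'
  · have hεξ : ε * ξ < 1 := by rwa [lt_div_iff₀' hε] at h'
    simp only [fEps_of_mem_Ico ⟨h, h'⟩, mem_Icc, h, h'.le, hεξ.le, mul_nonneg hε.le h, and_self]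
  · rw [fEps_of_ge hε h']
    constructor <;> rintro ⟨-, h2⟩ <;> constructor <;> linarith [one_div_pos.2 hε]

lemma deriv_fEps_ae_eq (hε : 0 < ε) :
    deriv (fEps ε) =ᵐ[volume] fun ξ => (Ioo 0 (1 / ε)).indicator (fun _ => ε - 1) ξ + 1 := by
  filter_upwards [(({0, 1 / ε} : Set ℝ).to_countable).ae_notMem volume] with ξ hξ
  simp only [mem_insert_iff, mem_singleton_iff, not_or] at hξ
  exact deriv_fEps hε hξ.1 hξ.2

lemma fEpsHomeomorph_mem_Gset (hε : 0 < ε) : fEpsHomeomorph hε ∈ Gset := by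
  refine mem_Gset_of_clamp (one_div_pos.2 hε).le zero_le_one (fEps_sub_self hε)
    (fun ξ => add_sub_cancel_left _ _) ?_
  refine (memLp_indicator_const 2 (measurableSet_Ioo (a := 0) (b := 1 / ε)) (ε - 1)
    (.inr measure_Ioo_lt_top.ne)).ae_eq ?_
  filter_upwards [deriv_fEps_ae_eq hε] with ξ hξ
  exact eq_sub_of_add_eq hξ.symm

lemma indicator_Icc_comp_fEps_mul_deriv_ae_eq (hε : 0 < ε) (c : ℝ) :
    (fun ξ => (Icc 0 1).indicator (fun _ => c) (fEps ε ξ) * deriv (fEps ε) ξ)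
      =ᵐ[volume] (Ioo 0 (1 / ε)).indicator fun _ => c * ε := by
  filter_upwards [deriv_fEps_ae_eq hε, (Ioo_ae_eq_Icc (μ := volume)).mem_iff]
    with ξ hderiv hIoo
  rw [hderiv]
  by_cases hξ : ξ ∈ Ioo 0 (1 / ε)
  · rw [indicator_of_mem ((fEps_mem_Icc_iff hε).2 (hIoo.1 hξ)), indicator_of_mem hξ,
      indicator_of_mem hξ]
    ring
  · rw [indicator_of_notMem (mt (fEps_mem_Icc_iff hε).1 (mt hIoo.2 hξ)), zero_mul,
      indicator_of_notMem hξ]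

end

theorem symmetric_relabel_does_not_separate_general
    (r rb : ℝ → ℝ)
    (hr : r = Set.indicator (Set.Icc (0 : ℝ) 1) 1)
    (hrb : rb = fun ξ => -Set.indicator (Set.Icc (0 : ℝ) 1) 1 ξ)
    (ε : ℝ) (hε0 : 0 < ε) :
    (∃ f : ℝ ≃ₜ ℝ, (∀ ξ, f ξ = fEps ε ξ) ∧ f ∈ Gset) ∧
    eLpNorm (fun ξ =>
        r (fEps ε ξ) * deriv (fEps ε) ξ - rb (fEps ε ξ) * deriv (fEps ε) ξ)
      2 volume ≤ ENNReal.ofReal (2 * Real.sqrt ε) := by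
  refine ⟨⟨fEpsHomeomorph hε0, fun _ => rfl, fEpsHomeomorph_mem_Gset hε0⟩, ?_⟩
  have hdiff : ∀ x, r x - rb x = (Icc 0 1).indicator (fun _ => 2) x := by
    intro x
    by_cases hx : x ∈ Icc (0 : ℝ) 1 <;> simp [hr, hrb, hx, one_add_one_eq_two]
  have hae := indicator_Icc_comp_fEps_mul_deriv_ae_eq hε0 2
  simp only [← hdiff, sub_mul] at hae
  rw [eLpNorm_congr_ae hae, eLpNorm_indicator_Ioo_const (one_div_pos.2 hε0).le, sub_zero]
  refine ofReal_le_ofReal (le_of_eq ?_)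
  rw [abs_of_pos (by positivity), one_div, Real.sqrt_inv, mul_assoc, ← div_eq_mul_inv,
    Real.div_sqrt]

/-- `f^ε ∈ G`, and relabeling both `r = 1_{[0,1]}` and `r̄ = -1_{[0,1]}` by `f^ε`
makes their difference small in `L²`: `‖(r∘f^ε)(f^ε)' - (r̄∘f^ε)(f^ε)'‖₂ ≤ 2√ε`. -/
theorem symmetric_relabel_does_not_separate
    (y U H : ℝ → ℝ) (Ky KH : NNReal)
    (hy : LipschitzWith Ky y) (hymono : Monotone y)
    (hH : LipschitzWith KH H) (hHmono : Monotone H)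
    (hid : ∀ ξ, y ξ + H ξ = ξ)
    (r rb : ℝ → ℝ)
    (hr : r = Set.indicator (Set.Icc (0 : ℝ) 1) 1)
    (hrb : rb = fun ξ => -Set.indicator (Set.Icc (0 : ℝ) 1) 1 ξ)
    (ε : ℝ) (hε0 : 0 < ε) (hε1 : ε < 1) :
    (∃ f : ℝ ≃ₜ ℝ, (∀ ξ, f ξ = fEps ε ξ) ∧ f ∈ Gset) ∧
    eLpNorm (fun ξ =>
        r (fEps ε ξ) * deriv (fEps ε) ξ - rb (fEps ε ξ) * deriv (fEps ε) ξ)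
      2 volume ≤ ENNReal.ofReal (2 * Real.sqrt ε) :=
  symmetric_relabel_does_not_separate_general r rb hr hrb ε hε0
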